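/- arXiv:2005.11983 — 5 statements merged into one kernel-verified Lean document; each statement's English description precedes it below -/
import Mathlib

section
/- Let G be a finite group acting on a finite set Ω such that G is a normal subgroup of some group X acting transitively on Ω. Then for every g ∈ G and every ω ∈ Ω, the fixed-point ratio satisfies fpr_Ω(g) = |Fix_Ω(g)|/|Ω| ≤ |G_ω| · |C_G(g)| / |G|. -/
/-!
Double count the pairs `(x, α) ∈ G × Ω` such that `x g x⁻¹` fixes `α`. For each `x` there are
`|Fix(g)|` of them, since `Fix(x g x⁻¹) = x • Fix(g)`. For each `α`, the element `x g x⁻¹` lies in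
`G_α`, and the conjugators in `G` of `g` onto a given element form a coset of `C_G(g)`, so there
are at most `|G_α| |C_G(g)|` of them. As `G` is normal in the transitive group `X`, the
stabilizers `G_α` are all conjugate in `X`, hence of order `|G_ω|`.
-/

open MulAction Pointwise

section ConjugationCount

variable {X : Type*} [Group X] [Finite X]

theorem card_conj_eq_le (G : Subgroup X) (g a : X) :
    Nat.card {x : X // x ∈ G ∧ x * g * x⁻¹ = a} ≤ Nat.card ↥(Subgroup.centralizer {g} ⊓ G) := by
  rcases isEmpty_or_nonempty {x : X // x ∈ G ∧ x * g * x⁻¹ = a} with _ | ⟨x₀, hx₀G, hx₀⟩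
  · simp
  have hmem (x : X) (hx : x ∈ G ∧ x * g * x⁻¹ = a) :
      x₀⁻¹ * x ∈ Subgroup.centralizer {g} ⊓ G := by
    refine ⟨Subgroup.mem_centralizer_singleton_iff.2 ?_, G.mul_mem (G.inv_mem hx₀G) hx.1⟩
    calc x₀⁻¹ * x * g = x₀⁻¹ * (x * g * x⁻¹) * x := by group
      _ = x₀⁻¹ * (x₀ * g * x₀⁻¹) * x := by rw [hx.2, hx₀]
      _ = g * (x₀⁻¹ * x) := by group
  exact Nat.card_le_card_of_injective (fun x => ⟨_, hmem x x.2⟩)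
    fun x y h => Subtype.ext (mul_left_cancel (congrArg Subtype.val h))

theorem card_conj_mem_le (G S : Subgroup X) {g : X} (hg : g ∈ G) :
    Nat.card {x : X // x ∈ G ∧ x * g * x⁻¹ ∈ S} ≤
      Nat.card ↥(S ⊓ G) * Nat.card ↥(Subgroup.centralizer {g} ⊓ G) := by
  have : Fintype ↥(S ⊓ G) := Fintype.ofFinite _
  let e : {x : X // x ∈ G ∧ x * g * x⁻¹ ∈ S} ≃
      Σ a : ↥(S ⊓ G), {x : X // x ∈ G ∧ x * g * x⁻¹ = a} :=
    { toFun x := ⟨⟨_, x.2.2, G.mul_mem (G.mul_mem x.2.1 hg) (G.inv_mem x.2.1)⟩, x, x.2.1, rfl⟩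
      invFun p := ⟨p.2, p.2.2.1, by rw [p.2.2.2]; exact p.1.2.1⟩
      left_inv _ := rfl
      right_inv := fun ⟨⟨_, _⟩, _, _, rfl⟩ => rfl }
  calc Nat.card {x : X // x ∈ G ∧ x * g * x⁻¹ ∈ S}
      = ∑ a : ↥(S ⊓ G), Nat.card {x : X // x ∈ G ∧ x * g * x⁻¹ = a} := by
        rw [Nat.card_congr e, Nat.card_sigma]
    _ ≤ ∑ _a : ↥(S ⊓ G), Nat.card ↥(Subgroup.centralizer {g} ⊓ G) :=
        Finset.sum_le_sum fun a _ => card_conj_eq_le G g a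
    _ = _ := by rw [Finset.sum_const, Finset.card_univ, ← Nat.card_eq_fintype_card, smul_eq_mul]

end ConjugationCount

section FixedPoints

variable {X Ω : Type*} [Group X] [MulAction X Ω]

theorem card_fixedBy_conj [Finite Ω] (g x : X) :
    Nat.card (fixedBy Ω (x * g * x⁻¹)) = Nat.card (fixedBy Ω g) := by
  rw [← smul_fixedBy, Nat.card_coe_set_eq, Nat.card_coe_set_eq, Set.ncard_smul_set]

theorem sum_card_conj_mem_stabilizer [Finite X] [Fintype Ω] (G : Subgroup X) (g : X) :
    ∑ α : Ω, Nat.card {x : X // x ∈ G ∧ x * g * x⁻¹ ∈ stabilizer X α} =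
      Nat.card G * Nat.card (fixedBy Ω g) := by
  classical
  have : Fintype X := Fintype.ofFinite X
  calc ∑ α : Ω, Nat.card {x : X // x ∈ G ∧ x * g * x⁻¹ ∈ stabilizer X α}
      = ∑ α : Ω, ∑ x : X, if x ∈ G ∧ (x * g * x⁻¹) • α = α then 1 else 0 := by
        simp only [Nat.card_eq_fintype_card, Fintype.card_subtype, Finset.card_filter,
          mem_stabilizer_iff]
    _ = ∑ x : X, ∑ α : Ω, if x ∈ G ∧ (x * g * x⁻¹) • α = α then 1 else 0 := Finset.sum_comm
    _ = ∑ x : X, if x ∈ G then Nat.card (fixedBy Ω (x * g * x⁻¹)) else 0 := by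
        refine Finset.sum_congr rfl fun x _ => ?_
        split_ifs with hx
        · simp only [hx, true_and, Nat.card_eq_fintype_card, Fintype.card_subtype,
            Finset.card_filter, mem_fixedBy]
        · simp [hx]
    _ = Nat.card G * Nat.card (fixedBy Ω g) := by
        simp_rw [card_fixedBy_conj]
        rw [← Finset.sum_filter, Finset.sum_const, smul_eq_mul, Nat.card_eq_fintype_card (α := G),
          Fintype.card_subtype]

theorem card_stabilizer_inf_eq_of_normal [IsPretransitive X Ω] (G : Subgroup X) [G.Normal]
    (α β : Ω) :
    Nat.card ↥(stabilizer X α ⊓ G) = Nat.card ↥(stabilizer X β ⊓ G) := by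
  obtain ⟨t, rfl⟩ := exists_smul_eq X α β
  have : stabilizer X (t • α) ⊓ G = MulAut.conj t • (stabilizer X α ⊓ G) := by
    rw [Subgroup.smul_inf, Subgroup.Normal.conj_smul_eq_self t G,
      stabilizer_smul_eq_stabilizer_map_conj, Subgroup.pointwise_smul_def]
    rfl
  rw [this]
  exact Nat.card_congr (Subgroup.equivSMul _ _).toEquiv

end FixedPoints

/-- If `G` is a normal subgroup of a group `X` acting transitively on a finite set `Ω`,
then for `g ∈ G` and `ω ∈ Ω` the fixed-point ratio of `g` on `Ω` is at most
`|G_ω| · |C_G(g)| / |G|`. -/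
theorem fpr_le_of_normal_in_transitive
    (X Ω : Type*) [Group X] [Finite X] [Finite Ω] [MulAction X Ω]
    [MulAction.IsPretransitive X Ω]
    (G : Subgroup X) [G.Normal] (g : X) (hg : g ∈ G) (ω : Ω) :
    (Nat.card {ω' : Ω // g • ω' = ω'} : ℚ) / Nat.card Ω ≤
      (Nat.card ↥(MulAction.stabilizer X ω ⊓ G) *
        Nat.card ↥(Subgroup.centralizer {g} ⊓ G) : ℚ) / Nat.card G := by
  have : Fintype Ω := Fintype.ofFinite Ω
  have : Nonempty Ω := ⟨ω⟩
  have key : Nat.card {ω' : Ω // g • ω' = ω'} * Nat.card G ≤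
      Nat.card ↥(stabilizer X ω ⊓ G) * Nat.card ↥(Subgroup.centralizer {g} ⊓ G) * Nat.card Ω :=
    calc Nat.card (fixedBy Ω g) * Nat.card G
        = ∑ α : Ω, Nat.card {x : X // x ∈ G ∧ x * g * x⁻¹ ∈ stabilizer X α} := by
          rw [sum_card_conj_mem_stabilizer, mul_comm]
      _ ≤ ∑ α : Ω, Nat.card ↥(stabilizer X α ⊓ G) * Nat.card ↥(Subgroup.centralizer {g} ⊓ G) :=
          Finset.sum_le_sum fun α _ => card_conj_mem_le G _ hg
      _ = _ := by
          simp_rw [card_stabilizer_inf_eq_of_normal G _ ω]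
          rw [Finset.sum_const, Finset.card_univ, ← Nat.card_eq_fintype_card, smul_eq_mul,
            mul_comm]
  rw [div_le_div_iff₀ (by exact_mod_cast Nat.card_pos) (by exact_mod_cast Nat.card_pos)]
  exact_mod_cast key
end

section
/- Let G be a transitive permutation group on a finite set Ω and G⁺ the subgroup generated by all point stabilizers. Then the exponent of G divides |G : Z(G)| · |Ω/G⁺|. -/
/-!
With `t = |G : Z(G)|`, the transfer `G → Z(G)` is `g ↦ g ^ t`. A central element fixing a point
of a faithful transitive action is trivial, so every point stabilizer, hence `G⁺`, lies in the
kernel of the transfer: `exp(G⁺) ∣ t`. Since `G⁺` is normal and contains a point stabilizer, its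
orbits correspond to its cosets, so `g ^ |Ω/G⁺| ∈ G⁺` for every `g`.
-/

open Subgroup

theorem Subgroup.exponent_dvd_exponent_mul_index {G : Type*} [Group G] (H : Subgroup G)
    [H.Normal] : Monoid.exponent G ∣ Monoid.exponent H * H.index :=
  Monoid.exponent_dvd_of_forall_pow_eq_one fun g => by
    rw [pow_mul']
    exact pow_exponent_eq_one (H.pow_index_mem g)

namespace MulAction

variable {G α : Type*} [Group G] [MulAction G α]

instance normal_iSup_stabilizer : (⨆ a : α, stabilizer G a).Normal := by
  refine normal_iff_map_conj_eq.mpr fun g => ?_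
  simp_rw [Subgroup.map_iSup, ← MulEquiv.toMonoidHom_eq_coe,
    ← stabilizer_smul_eq_stabilizer_map_conj]
  exact (MulAction.surjective g).iSup_comp fun a => stabilizer G a

theorem orbitRel_smul_iff_mem [IsPretransitive G α] {H : Subgroup G} [H.Normal] {a : α}
    (ha : stabilizer G a ≤ H) (g k : G) :
    orbitRel H α (g • a) (k • a) ↔ g⁻¹ * k ∈ H := by
  rw [orbitRel_apply, mem_orbit_iff]
  constructor
  · rintro ⟨⟨h, hh⟩, hk⟩
    have hstab : g⁻¹ * h * k ∈ stabilizer G a := by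
      rw [mem_stabilizer_iff, mul_smul, mul_smul, ← Subgroup.mk_smul h hh, hk, inv_smul_smul]
    simpa [mul_assoc] using mul_mem (ha hstab) (Normal.conj_mem' ‹_› _ (inv_mem hh) k)
  · intro hgk
    refine ⟨⟨g * k⁻¹, by simpa using inv_mem (Normal.mem_comm ‹_› hgk)⟩, ?_⟩
    rw [Subgroup.mk_smul, smul_smul, inv_mul_cancel_right]

theorem card_orbitRel_quotient_eq_index [IsPretransitive G α] {H : Subgroup G} [H.Normal]
    {a : α} (ha : stabilizer G a ≤ H) : Nat.card (orbitRel.Quotient H α) = H.index := by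
  have key (g k : G) : (⟦g • a⟧ : orbitRel.Quotient H α) = ⟦k • a⟧ ↔ (g : G ⧸ H) = k :=
    Quotient.eq.trans ((orbitRel_smul_iff_mem ha g k).trans QuotientGroup.eq.symm)
  refine (Nat.card_eq_of_bijective (Quotient.lift (fun g => ⟦g • a⟧)
    fun g k hgk => (key g k).2 (Quotient.sound hgk)) ⟨?_, ?_⟩).symm
  · rintro ⟨g⟩ ⟨k⟩ hgk
    exact (key g k).1 hgk
  · rintro ⟨b⟩
    obtain ⟨g, rfl⟩ := exists_smul_eq G a b
    exact ⟨(g : G ⧸ H), rfl⟩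

variable [FaithfulSMul G α] [IsPretransitive G α]

theorem eq_one_of_mem_center_of_mem_stabilizer {z : G} {a : α} (hz : z ∈ center G)
    (ha : z ∈ stabilizer G a) : z = 1 := by
  refine FaithfulSMul.eq_of_smul_eq_smul (α := α) fun b => ?_
  obtain ⟨g, rfl⟩ := exists_smul_eq G a b
  rw [smul_smul, ← (mem_center_iff.mp hz) g, mul_smul, mem_stabilizer_iff.mp ha, one_smul]

variable [(center G).FiniteIndex]

theorem iSup_stabilizer_le_ker_transferCenterPow :
    ⨆ a : α, stabilizer G a ≤ (MonoidHom.transferCenterPow G).ker :=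
  iSup_le fun a h ha => Subtype.ext <| eq_one_of_mem_center_of_mem_stabilizer
    (MonoidHom.transferCenterPow G h).2
    (by rw [MonoidHom.transferCenterPow_apply]; exact pow_mem ha _)

theorem exponent_iSup_stabilizer_dvd_index_center :
    Monoid.exponent (⨆ a : α, stabilizer G a : Subgroup G) ∣ (center G).index :=
  Monoid.exponent_dvd_of_forall_pow_eq_one fun ⟨h, hh⟩ => Subtype.ext <| by
    simpa [MonoidHom.transferCenterPow_apply] using
      congrArg Subtype.val (iSup_stabilizer_le_ker_transferCenterPow hh)

end MulAction

/-- For a transitive permutation group `G` on a finite set `Ω` with `G⁺` the subgroup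
generated by all point stabilizers, `exp(G)` divides `|G : Z(G)| · |Ω/G⁺|`. -/
theorem exponent_dvd_index_center_mul_orbits
    (G Ω : Type*) [Group G] [Finite Ω] [MulAction G Ω] [FaithfulSMul G Ω]
    [MulAction.IsPretransitive G Ω] :
    Monoid.exponent G ∣
      (Subgroup.center G).index *
        Nat.card (MulAction.orbitRel.Quotient
          (⨆ δ : Ω, MulAction.stabilizer G δ : Subgroup G) Ω) := by
  obtain _ | ⟨⟨ω⟩⟩ := isEmpty_or_nonempty Ω
  · simp -- there are no orbits, so the right-hand side is `0`
  have : Finite G := Finite.of_injective _ (MulAction.toPerm_injective (α := G) (β := Ω))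
  rw [MulAction.card_orbitRel_quotient_eq_index (le_iSup (MulAction.stabilizer G) ω)]
  exact (exponent_dvd_exponent_mul_index _).trans
    (mul_dvd_mul_right MulAction.exponent_iSup_stabilizer_dvd_index_center _)
end

section
/- Let Γ be a finite connected graph and G a group of automorphisms of Γ acting semiregularly on the vertices (all vertex stabilizers trivial). Then G can be generated by at most |E(Γ)/G| − |V(Γ)/G| + 1 elements, where E(Γ)/G and V(Γ)/G denote the sets of G-orbits on edges and vertices respectively. -/
section Aux

variable {V : Type*} (Γ : SimpleGraph V)

private lemma aux_walk_closed (D : Set V)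
    (hD : ∀ u w, u ∈ D → Γ.Adj u w → w ∈ D) :
    ∀ {a b : V}, Γ.Walk a b → a ∈ D → b ∈ D := by
  intro a b p
  induction p with
  | nil => exact id
  | cons h _ ih => intro ha; exact ih (hD _ _ ha h)

private lemma aux_cross (hpre : Γ.Preconnected) (C : Set V)
    (hne : C.Nonempty) (hnc : ∃ v, v ∉ C) :
    ∃ u w, u ∈ C ∧ w ∉ C ∧ Γ.Adj u w := by
  obtain ⟨u0, hu0⟩ := hne
  obtain ⟨v1, hv1⟩ := hnc
  obtain ⟨p⟩ := hpre u0 v1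
  clear hpre
  have : ∀ (a b : V) (_ : Γ.Walk a b), a ∈ C → b ∉ C →
      ∃ u w, u ∈ C ∧ w ∉ C ∧ Γ.Adj u w := by
    intro a b p
    induction p with
    | nil => intro h1 h2; exact absurd h1 h2
    | @cons x y z h q ih =>
      intro hx hz
      by_cases hy : y ∈ C
      · exact ih hy hz
      · exact ⟨x, y, hx, hy, h⟩
  exact this u0 v1 p hu0 hv1

end Aux

private lemma exists_transversal (V G : Type*) [Fintype V] [Group G] [MulAction G V]
    (Γ : SimpleGraph V) (hconn : Γ.Connected)
    (hAut : ∀ (g : G) (u w : V), Γ.Adj (g • u) (g • w) ↔ Γ.Adj u w) :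
    ∃ (n : ℕ) (t : Fin n → V), 0 < n ∧
      (∀ (i j : Fin n) (g : G), g • t i = t j → i = j) ∧
      (∀ i : Fin n, 0 < i.val → ∃ j : Fin n, j.val < i.val ∧ Γ.Adj (t j) (t i)) ∧
      (∀ v : V, ∃ (g : G) (i : Fin n), g • t i = v) := by
  classical
  obtain ⟨v0⟩ := hconn.nonempty
  set P : (n : ℕ) → (Fin n → V) → Prop := fun n t =>
    0 < n ∧ (∀ (i j : Fin n) (g : G), g • t i = t j → i = j) ∧
      (∀ i : Fin n, 0 < i.val → ∃ j : Fin n, j.val < i.val ∧ Γ.Adj (t j) (t i)) with hP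
  by_contra hcon
  push_neg at hcon
  -- every good family fails to cover; so we can always extend
  have step : ∀ (n : ℕ) (t : Fin n → V), P n t → ∃ t' : Fin (n + 1) → V, P (n + 1) t' := by
    intro n t ⟨hn, hdisj, hcn⟩
    obtain ⟨v, hv⟩ := hcon n t hn hdisj hcn
    set C : Set V := {u | ∃ (g : G) (i : Fin n), g • t i = u} with hC
    have hne : C.Nonempty := ⟨t ⟨0, hn⟩, 1, ⟨0, hn⟩, one_smul _ _⟩
    have hvC : v ∉ C := by
      rintro ⟨g, i, hg⟩; exact hv g i hg
    obtain ⟨u, w, huC, hwC, hadj⟩ := aux_cross Γ hconn.preconnected C hne ⟨v, hvC⟩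
    obtain ⟨g, i0, hgi0⟩ := huC
    set w' : V := g⁻¹ • w with hw'
    have hadj' : Γ.Adj (t i0) w' := by
      show Γ.Adj (t i0) (g⁻¹ • w)
      have := (hAut g⁻¹ u w).mpr hadj
      rwa [← hgi0, inv_smul_smul] at this
    have hw'C : w' ∉ C := by
      rintro ⟨g', j, hg'⟩
      exact hwC ⟨g * g', j, by rw [mul_smul, hg', hw', smul_inv_smul]⟩
    refine ⟨Fin.snoc t w', Nat.succ_pos n, ?_, ?_⟩
    · intro i j g₀ hg₀
      induction i using Fin.lastCases with
      | last =>
        induction j using Fin.lastCases with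
        | last => rfl
        | cast j' =>
          rw [Fin.snoc_last, Fin.snoc_castSucc] at hg₀
          exact absurd ⟨g₀⁻¹, j', by rw [← hg₀, inv_smul_smul]⟩ hw'C
      | cast i' =>
        induction j using Fin.lastCases with
        | last =>
          rw [Fin.snoc_last, Fin.snoc_castSucc] at hg₀
          exact absurd ⟨g₀, i', hg₀⟩ hw'C
        | cast j' =>
          rw [Fin.snoc_castSucc, Fin.snoc_castSucc] at hg₀
          exact congrArg Fin.castSucc (hdisj i' j' g₀ hg₀)
    · intro i hi
      induction i using Fin.lastCases with
      | last =>
        refine ⟨i0.castSucc, ?_, ?_⟩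
        · simp
        · rw [Fin.snoc_castSucc, Fin.snoc_last]; exact hadj'
      | cast i' =>
        have hi' : 0 < i'.val := by simpa using hi
        obtain ⟨j, hj1, hj2⟩ := hcn i' hi'
        exact ⟨j.castSucc, by simpa using hj1, by
          rw [Fin.snoc_castSucc, Fin.snoc_castSucc]; exact hj2⟩
  have grow : ∀ m : ℕ, ∃ (n : ℕ) (t : Fin n → V), P n t ∧ m ≤ n := by
    intro m
    induction m with
    | zero =>
      refine ⟨1, fun _ => v0, ⟨one_pos, ?_, ?_⟩, Nat.zero_le _⟩
      · intro i j _ _; exact Subsingleton.elim i j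
      · intro i hi; exact absurd hi (by omega)
    | succ m ih =>
      obtain ⟨n, t, hPt, hmn⟩ := ih
      obtain ⟨t', hPt'⟩ := step n t hPt
      exact ⟨n + 1, t', hPt', by omega⟩
  obtain ⟨n, t, ⟨hn, hdisj, _⟩, hmn⟩ := grow (Fintype.card V + 1)
  have hinj : Function.Injective t := fun i j h =>
    hdisj i j 1 (by rw [one_smul, h])
  have := Fintype.card_le_of_injective t hinj
  simp at this
  omega

/-- Let `Γ` be a finite connected graph and `G` a group of automorphisms of `Γ` acting
semiregularly on the vertices. Then `G` can be generated by at most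
`|E(Γ)/G| − |V(Γ)/G| + 1` elements. -/
theorem rank_le_betti_of_semiregular
    (V G : Type*) [Fintype V] [Group G] [Finite G] [MulAction G V] [FaithfulSMul G V]
    (Γ : SimpleGraph V) (hconn : Γ.Connected)
    (hAut : ∀ (g : G) (u w : V), Γ.Adj (g • u) (g • w) ↔ Γ.Adj u w)
    (hsemi : ∀ (g : G) (v : V), g • v = v → g = 1) :
    (Group.rank G : ℤ) ≤
      (Nat.card (Quot (fun e e' : Γ.edgeSet => ∃ g : G, Sym2.map (g • ·) e.val = e'.val)) : ℤ)
        - Nat.card (MulAction.orbitRel.Quotient G V) + 1 := by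
  classical
  obtain ⟨n, t, hn, hdisj, htree, hcov⟩ := exists_transversal V G Γ hconn hAut
  -- key rigidity lemma
  have L1 : ∀ (h : G) (i j : Fin n), h • t i = t j → h = 1 ∧ i = j := by
    intro h i j he
    have hij := hdisj i j h he
    subst hij
    exact ⟨hsemi h (t i) he, rfl⟩
  set i₀ : Fin n := ⟨0, hn⟩ with hi₀
  -- generating set
  set S : Set G := {g | g ≠ 1 ∧ ∃ i j, Γ.Adj (t i) (g • t j)} with hS
  set H : Subgroup G := Subgroup.closure S with hH
  -- S generates G
  have hgen : H = ⊤ := by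
    set D : Set V := {v | ∃ h : G, h ∈ H ∧ ∃ i, h • t i = v} with hD
    have hDadj : ∀ u w, u ∈ D → Γ.Adj u w → w ∈ D := by
      rintro u w ⟨h, hh, i, hi⟩ hadj
      obtain ⟨g, j, hgj⟩ := hcov (h⁻¹ • w)
      have hgH : g ∈ H := by
        by_cases hg1 : g = 1
        · rw [hg1]; exact one_mem _
        · apply Subgroup.subset_closure
          refine ⟨hg1, i, j, ?_⟩
          have h2 := (hAut h⁻¹ u w).mpr hadj
          rw [← hi, inv_smul_smul] at h2
          rw [hgj]; exact h2
      refine ⟨h * g, mul_mem hh hgH, j, ?_⟩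
      rw [mul_smul, hgj, smul_inv_smul]
    have hDuniv : ∀ v, v ∈ D := by
      intro v
      obtain ⟨p⟩ := hconn.preconnected (t i₀) v
      exact aux_walk_closed Γ D hDadj p ⟨1, one_mem _, i₀, one_smul _ _⟩
    rw [eq_top_iff]
    intro g _
    obtain ⟨h, hh, i, hi⟩ := hDuniv (g • t i₀)
    have : (h⁻¹ * g) • t i₀ = t i := by rw [mul_smul, ← hi, inv_smul_smul]
    obtain ⟨h1, -⟩ := L1 _ _ _ this
    rw [(inv_mul_eq_one.mp h1).symm]; exact hh
  -- S is symmetric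
  have hSsymm : ∀ g ∈ S, g⁻¹ ∈ S := by
    rintro g ⟨hg1, i, j, hadj⟩
    refine ⟨inv_ne_one.mpr hg1, j, i, ?_⟩
    have := (hAut g⁻¹ (t i) (g • t j)).mpr hadj
    rw [inv_smul_smul] at this
    exact this.symm
  -- a choice of one element from each pair {g, g⁻¹}
  letI : Fintype G := Fintype.ofFinite G
  letI lo : LinearOrder G := LinearOrder.lift' (Fintype.equivFin G) (Equiv.injective _)
  set pick : G → G := fun g => min g g⁻¹ with hpickdef
  have hpick1 : ∀ g, pick g = g ∨ pick g = g⁻¹ := fun g => min_choice g g⁻¹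
  have hpick2 : ∀ g, pick g⁻¹ = pick g := by
    intro g; simp only [hpickdef, inv_inv]; exact min_comm _ _
  set S' : Set G := pick '' S with hS'
  have hS'S : S' ⊆ S := by
    rintro x ⟨g, hg, rfl⟩
    rcases hpick1 g with h | h
    · rw [h]; exact hg
    · rw [h]; exact hSsymm g hg
  have hfix : ∀ x ∈ S', pick x = x := by
    rintro x ⟨g, hg, rfl⟩
    rcases hpick1 g with h | h
    · rw [h]; exact h
    · rw [h, hpick2]; exact h
  have hS'fin : S'.Finite := Set.toFinite _
  -- S' generates G
  have hgen' : Subgroup.closure S' = ⊤ := by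
    rw [eq_top_iff, ← hgen, hH]
    apply (Subgroup.closure_le _).mpr
    intro g hg
    have hmem : pick g ∈ Subgroup.closure S' :=
      Subgroup.subset_closure ⟨g, hg, rfl⟩
    rcases hpick1 g with h | h
    · rwa [h] at hmem
    · rw [h] at hmem
      simpa using Subgroup.inv_mem _ hmem
  -- rank bound
  have hrank : Group.rank G ≤ hS'fin.toFinset.card := by
    apply Group.rank_le
    rw [Set.Finite.coe_toFinset]
    exact hgen'
  have hcard : hS'fin.toFinset.card = Nat.card S' :=
    (Nat.card_eq_card_finite_toFinset hS'fin).symm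
  -- the edge orbit relation is an equivalence
  set r : Γ.edgeSet → Γ.edgeSet → Prop :=
    fun e e' => ∃ g : G, Sym2.map (g • ·) e.val = e'.val with hr
  have hone : ((fun x : V => (1 : G) • x)) = id := funext fun x => one_smul G x
  have requiv : Equivalence r := by
    constructor
    · intro e; exact ⟨1, by rw [hone, Sym2.map_id, id]⟩
    · rintro e e' ⟨g, hg⟩
      refine ⟨g⁻¹, ?_⟩
      rw [← hg, Sym2.map_map]
      have : ((g⁻¹ • ·) ∘ (g • ·) : V → V) = id := funext fun x => inv_smul_smul g x
      rw [this, Sym2.map_id, id]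
    · rintro e e' e'' ⟨g, hg⟩ ⟨g', hg'⟩
      refine ⟨g' * g, ?_⟩
      rw [← hg', ← hg, Sym2.map_map]
      congr 1
      exact funext fun x => mul_smul g' g x
  have key : ∀ (a b : Γ.edgeSet), Quot.mk r a = Quot.mk r b →
      ∃ g : G, Sym2.map (g • ·) a.val = b.val :=
    fun a b h => requiv.eqvGen_iff.mp (Quot.eq.mp h)
  -- witnesses for tree edges
  have hn1 : ∀ i : Fin (n - 1), i.val + 1 < n := fun i => by have := i.isLt; omega
  set f1 : Fin (n - 1) → Fin n := fun i => ⟨i.val + 1, hn1 i⟩ with hf1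
  have htree' : ∀ i : Fin (n - 1), ∃ j : Fin n, j.val < (f1 i).val ∧ Γ.Adj (t j) (t (f1 i)) :=
    fun i => htree (f1 i) (by simp [hf1])
  choose jt hjtlt hjtadj using htree'
  -- witnesses for generator edges
  have hwit : ∀ g : S', ∃ (i j : Fin n), Γ.Adj (t i) ((g : G) • t j) := fun g => (hS'S g.2).2
  choose wi wj hwadj using hwit
  have hne1 : ∀ g : S', (g : G) ≠ 1 := fun g => (hS'S g.2).1
  -- the injection
  set F : Fin (n - 1) ⊕ S' → Quot r :=
    Sum.elim (fun i => Quot.mk r ⟨s(t (jt i), t (f1 i)), Γ.mem_edgeSet.mpr (hjtadj i)⟩)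
      (fun g => Quot.mk r ⟨s(t (wi g), (g : G) • t (wj g)), Γ.mem_edgeSet.mpr (hwadj g)⟩) with hF
  have Finj : Function.Injective F := by
    intro x y hxy
    match x, y with
    | Sum.inl i, Sum.inl i' =>
      obtain ⟨g, hg⟩ := key _ _ hxy
      rw [Sym2.map_pair_eq, Sym2.eq_iff] at hg
      rcases hg with ⟨h1, h2⟩ | ⟨h1, h2⟩
      · obtain ⟨-, he⟩ := L1 g _ _ h2
        apply congrArg
        apply Fin.ext
        have := congrArg Fin.val he
        simpa [hf1] using this
      · obtain ⟨-, he1⟩ := L1 g _ _ h1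
        obtain ⟨-, he2⟩ := L1 g _ _ h2
        exfalso
        have hv1 := congrArg Fin.val he1
        have hv2 := congrArg Fin.val he2
        have hl1 := hjtlt i
        have hl2 := hjtlt i'
        simp only [hf1] at hv1 hv2 hl1 hl2
        omega
    | Sum.inl i, Sum.inr g =>
      exfalso
      obtain ⟨g', hg'⟩ := key _ _ hxy
      rw [Sym2.map_pair_eq, Sym2.eq_iff] at hg'
      rcases hg' with ⟨h1, h2⟩ | ⟨h1, h2⟩
      · obtain ⟨hg'1, -⟩ := L1 g' _ _ h1
        rw [hg'1, one_smul] at h2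
        obtain ⟨hg1, -⟩ := L1 (g : G) _ _ h2.symm
        exact hne1 g hg1
      · obtain ⟨hg'1, -⟩ := L1 g' _ _ h2
        rw [hg'1, one_smul] at h1
        obtain ⟨hg1, -⟩ := L1 (g : G) _ _ h1.symm
        exact hne1 g hg1
    | Sum.inr g, Sum.inl i =>
      exfalso
      obtain ⟨g', hg'⟩ := key _ _ hxy
      rw [Sym2.map_pair_eq, Sym2.eq_iff] at hg'
      rcases hg' with ⟨h1, h2⟩ | ⟨h1, h2⟩
      · obtain ⟨hg'1, -⟩ := L1 g' _ _ h1
        rw [hg'1, one_smul] at h2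
        obtain ⟨hg1, -⟩ := L1 (g : G) _ _ h2
        exact hne1 g hg1
      · obtain ⟨hg'1, -⟩ := L1 g' _ _ h1
        rw [hg'1, one_smul] at h2
        obtain ⟨hg1, -⟩ := L1 (g : G) _ _ h2
        exact hne1 g hg1
    | Sum.inr g, Sum.inr g' =>
      obtain ⟨h₀, hg₀⟩ := key _ _ hxy
      rw [Sym2.map_pair_eq, Sym2.eq_iff] at hg₀
      rcases hg₀ with ⟨h1, h2⟩ | ⟨h1, h2⟩
      · obtain ⟨hh1, -⟩ := L1 h₀ _ _ h1
        rw [hh1, one_smul] at h2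
        have h3 : ((g' : G)⁻¹ * (g : G)) • t (wj g) = t (wj g') := by
          rw [mul_smul, h2, inv_smul_smul]
        obtain ⟨h4, -⟩ := L1 _ _ _ h3
        exact congrArg Sum.inr (Subtype.ext (inv_mul_eq_one.mp h4).symm)
      · have h3 : ((g' : G)⁻¹ * h₀) • t (wi g) = t (wj g') := by
          rw [mul_smul, h1, inv_smul_smul]
        obtain ⟨h4, -⟩ := L1 _ _ _ h3
        have h5 : h₀ = (g' : G) := (inv_mul_eq_one.mp h4).symm
        have h6 : (h₀ * (g : G)) • t (wj g) = t (wi g') := by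
          rw [mul_smul, h2]
        obtain ⟨h7, -⟩ := L1 _ _ _ h6
        have h8 : (g' : G) = (g : G)⁻¹ :=
          h5.symm.trans (mul_eq_one_iff_eq_inv.mp h7)
        have h9 : (g' : G) = (g : G) := by
          have := hfix _ g'.2
          rw [h8] at this ⊢
          rw [hpick2] at this
          rw [← this, hfix _ g.2]
        exact congrArg Sum.inr (Subtype.ext h9.symm)
  have hle : (n - 1) + Nat.card S' ≤ Nat.card (Quot r) := by
    have := Nat.card_le_card_of_injective F Finj
    rwa [Nat.card_sum, Nat.card_eq_fintype_card (α := Fin (n-1)), Fintype.card_fin] at this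
  -- number of vertex orbits is n
  have hnV : Nat.card (MulAction.orbitRel.Quotient G V) = n := by
    set q : Fin n → MulAction.orbitRel.Quotient G V := fun i => Quotient.mk'' (t i) with hq
    have hqbij : Function.Bijective q := by
      constructor
      · intro i j hij
        rw [hq] at hij
        simp only at hij
        rw [Quotient.eq''] at hij
        rw [MulAction.orbitRel_apply, MulAction.mem_orbit_iff] at hij
        obtain ⟨g, hg⟩ := hij
        exact (hdisj j i g hg).symm
      · intro x
        induction x using Quotient.inductionOn' with
        | h v =>
          obtain ⟨g, i, hg⟩ := hcov v
          refine ⟨i, Quotient.sound' ?_⟩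
          rw [MulAction.orbitRel_apply, MulAction.mem_orbit_iff]
          exact ⟨g⁻¹, by rw [← hg, inv_smul_smul]⟩
    have := Nat.card_eq_of_bijective q hqbij
    rw [Nat.card_eq_fintype_card (α := Fin n), Fintype.card_fin] at this
    exact this.symm
  rw [hnV]
  have h1 : Group.rank G ≤ Nat.card S' := hcard ▸ hrank
  omega
end

section
/- Let Γ be a finite connected non-bipartite graph and G ≤ Aut(Γ) arc-transitive and locally quasiprimitive, with Γ not complete bipartite. Then exp(G) divides |G : Z(G)|. -/
/-- Let `Γ` be a finite connected non-bipartite graph and `G ≤ Aut(Γ)` arc-transitive and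
locally quasiprimitive, with `Γ` not complete bipartite. Then `exp(G)` divides
`|G : Z(G)|`. -/
theorem exponent_dvd_center_index_of_nonbipartite
    (V G : Type*) [Fintype V] [Group G] [Finite G] [MulAction G V] [FaithfulSMul G V]
    (Γ : SimpleGraph V) (hconn : Γ.Connected)
    (hAut : ∀ (g : G) (u w : V), Γ.Adj (g • u) (g • w) ↔ Γ.Adj u w)
    (hnb : ¬ ∃ s : Set V, ∀ u w : V, Γ.Adj u w → (u ∈ s ↔ w ∉ s))
    (hat : ∀ (u v u' v' : V), Γ.Adj u v → Γ.Adj u' v' →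
      ∃ g : G, g • u = u' ∧ g • v = v')
    (hqp : ∀ (v : V) (N : Subgroup (MulAction.stabilizer G v)), N.Normal →
      (∃ n ∈ N, ∃ u ∈ Γ.neighborSet v, ((n : MulAction.stabilizer G v) : G) • u ≠ u) →
      ∀ u ∈ Γ.neighborSet v, ∀ w ∈ Γ.neighborSet v,
        ∃ n ∈ N, ((n : MulAction.stabilizer G v) : G) • u = w)
    (hncb : ¬ ∃ s : Set V, ∀ u w : V,
      Γ.Adj u w ↔ ((u ∈ s ∧ w ∉ s) ∨ (u ∉ s ∧ w ∈ s))) :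
    Monoid.exponent G ∣ (Subgroup.center G).index := by
  classical
  -- `H` is the subgroup generated by all vertex stabilizers.
  set H : Subgroup G := ⨆ v : V, MulAction.stabilizer G v with hHdef
  have hstab : ∀ v : V, MulAction.stabilizer G v ≤ H := fun v => le_iSup _ v
  -- The orbit relation of `H`.
  let R : V → V → Prop := fun a b => ∃ h : G, h ∈ H ∧ h • a = b
  have hRrefl : ∀ a, R a a := fun a => ⟨1, one_mem H, one_smul _ _⟩
  have hRsymm : ∀ a b, R a b → R b a := by
    rintro a b ⟨h, hh, rfl⟩
    exact ⟨h⁻¹, inv_mem hh, by rw [inv_smul_smul]⟩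
  have hRtrans : ∀ a b c, R a b → R b c → R a c := by
    rintro a b c ⟨h, hh, rfl⟩ ⟨k, hk, rfl⟩
    exact ⟨k * h, mul_mem hk hh, by rw [mul_smul]⟩
  -- Any two neighbors of a vertex are `R`-related.
  have hK1 : ∀ x y y' : V, Γ.Adj x y → Γ.Adj x y' → R y y' := by
    intro x y y' h1 h2
    obtain ⟨g, hgx, hgy⟩ := hat x y x y' h1 h2
    exact ⟨g, hstab x hgx, hgy⟩
  -- Adjacency transports the orbit relation.
  have hA : ∀ p q a b : V, Γ.Adj p q → Γ.Adj a b → R p a → R q b := by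
    rintro p q a b hpq hab ⟨h, hh, rfl⟩
    have h1 : Γ.Adj (h • p) (h • q) := (hAut h p q).mpr hpq
    have h2 : R (h • q) b := hK1 (h • p) (h • q) b h1 hab
    exact hRtrans q (h • q) b ⟨h, hh, rfl⟩ h2
  -- The graph has an edge.
  obtain ⟨u0, w0, huw0⟩ : ∃ u w : V, Γ.Adj u w := by
    by_contra h
    push_neg at h
    exact hnb ⟨∅, fun u w hadj => absurd hadj (h u w)⟩
  -- Every vertex is `R`-related to `u0` or to `w0`.
  have hC : ∀ z : V, R u0 z ∨ R w0 z := by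
    have key : ∀ y z : V, Γ.Walk y z → (R u0 y ∨ R w0 y) → (R u0 z ∨ R w0 z) := by
      intro y z p
      induction p with
      | nil => exact id
      | cons hadj p ih =>
        intro hy
        apply ih
        rcases hy with hy | hy
        · exact Or.inr (hA u0 w0 _ _ huw0 hadj hy)
        · exact Or.inl (hA w0 u0 _ _ huw0.symm hadj hy)
    intro z
    exact key u0 z (hconn.preconnected u0 z).some (Or.inl (hRrefl u0))
  -- `H` is transitive: otherwise the two orbits form a bipartition.
  have htrans : ∀ z : V, R u0 z := by
    by_cases h0 : R u0 w0
    · intro z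
      rcases hC z with hz | hz
      · exact hz
      · exact hRtrans u0 w0 z h0 hz
    · exfalso
      apply hnb
      refine ⟨{a | R u0 a}, fun a b hab => ?_⟩
      simp only [Set.mem_setOf_eq]
      constructor
      · intro ha hb
        exact h0 (hRtrans u0 b w0 hb (hRsymm w0 b (hA u0 w0 a b huw0 hab ha)))
      · intro hb
        rcases hC a with ha | ha
        · exact ha
        · exact absurd (hA w0 u0 a b huw0.symm hab ha) hb
  have htrans' : ∀ a b : V, ∃ h : G, h ∈ H ∧ h • a = b := by
    intro a b
    obtain ⟨h1, hh1, hs1⟩ := htrans a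
    obtain ⟨h2, hh2, hs2⟩ := htrans b
    refine ⟨h2 * h1⁻¹, mul_mem hh2 (inv_mem hh1), ?_⟩
    rw [mul_smul, ← hs1, inv_smul_smul, hs2]
  -- `H = ⊤`.
  have hHtop : H = ⊤ := by
    rw [eq_top_iff]
    intro g _
    obtain ⟨h, hh, hs⟩ := htrans' u0 (g • u0)
    have hmem : h⁻¹ * g ∈ MulAction.stabilizer G u0 := by
      simp only [MulAction.mem_stabilizer_iff, mul_smul, ← hs, inv_smul_smul]
    have : h * (h⁻¹ * g) ∈ H := mul_mem hh (hstab u0 hmem)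
    simpa using this
  -- Central elements fixing a vertex are trivial.
  have hcent : ∀ z : G, z ∈ Subgroup.center G → ∀ v : V, z • v = v → z = 1 := by
    intro z hz v hv
    apply eq_of_smul_eq_smul (M := G) (α := V)
    intro w
    obtain ⟨h, _, hs⟩ := htrans' v w
    have hcomm : z * h = h * z := ((Subgroup.mem_center_iff.mp hz) h).symm
    calc z • w = z • h • v := by rw [hs]
      _ = (z * h) • v := by rw [mul_smul]
      _ = (h * z) • v := by rw [hcomm]
      _ = h • (z • v) := by rw [mul_smul]
      _ = w := by rw [hv, hs]
      _ = (1 : G) • w := by rw [one_smul]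
  -- The transfer homomorphism `g ↦ g ^ index` into the center kills stabilizers.
  have hker : ∀ (v : V) (x : G), x ∈ MulAction.stabilizer G v →
      MonoidHom.transferCenterPow G x = 1 := by
    intro v x hx
    have hpow : (MonoidHom.transferCenterPow G x : G) = x ^ (Subgroup.center G).index :=
      MonoidHom.transferCenterPow_apply x
    have hmem : (MonoidHom.transferCenterPow G x : G) ∈ Subgroup.center G :=
      (MonoidHom.transferCenterPow G x).2
    have hfix : x ^ (Subgroup.center G).index • v = v := by
      have : x ^ (Subgroup.center G).index ∈ MulAction.stabilizer G v :=
        pow_mem hx _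
      exact this
    have : (MonoidHom.transferCenterPow G x : G) = 1 := by
      apply hcent _ hmem v
      rw [hpow]; exact hfix
    exact Subtype.ext this
  -- Hence every `g` satisfies `g ^ index = 1`.
  have hpow1 : ∀ g : G, g ^ (Subgroup.center G).index = 1 := by
    have hle : H ≤ (MonoidHom.transferCenterPow G).ker := by
      rw [hHdef]
      apply iSup_le
      intro v x hx
      exact hker v x hx
    intro g
    have hg : g ∈ (MonoidHom.transferCenterPow G).ker := hle (hHtop ▸ Subgroup.mem_top g)
    have := MonoidHom.mem_ker.mp hg
    calc g ^ (Subgroup.center G).index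
        = (MonoidHom.transferCenterPow G g : G) := (MonoidHom.transferCenterPow_apply g).symm
      _ = ((1 : Subgroup.center G) : G) := by rw [this]
      _ = 1 := rfl
  exact Monoid.exponent_dvd_of_forall_pow_eq_one hpow1
end

section
/- Let Γ be a finite connected graph, not complete bipartite, and G ≤ Aut(Γ) locally quasiprimitive and edge-transitive with G_v transitive on Γ(v) for all v. Let Z = Z(G). Then |G| ≤ |G:Z| · (2|G:Z|)^{|G:Z|}. Consequently |G : Z(G)| ≥ F(|G|) for the strictly increasing function F inverse to x ↦ x(2x)^x. -/
/-!
The centre `Z` acts semiregularly on the vertices: a nontrivial central element fixing a vertex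
fixes its whole orbit, and local quasiprimitivity then makes `Γ` complete bipartite. Hence the
transfer `G → Z`, `g ↦ g ^ |G : Z|`, kills every vertex stabiliser; by local transitivity its
kernel has at most two orbits, so it has index at most two and `Z` has exponent dividing
`2 |G : Z|`. Since `Z` acts freely, it is generated by the voltages of the arcs with respect to
an equivariant coordinate `V → Z`; by edge-transitivity these take at most `|G : Z|` values up
to inversion, so `rank Z ≤ |G : Z|` and `|Z| ≤ (2 |G : Z|) ^ |G : Z|`.
-/

open MulAction Subgroup

namespace SimpleGraph

variable {V : Type*} {Γ : SimpleGraph V}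

/-- For `s = ∅` this says that `Γ` has no edges. -/
def IsCompleteBipartiteOn (Γ : SimpleGraph V) (s : Set V) : Prop :=
  ∀ u w, Γ.Adj u w ↔ (u ∈ s ∧ w ∉ s) ∨ (u ∉ s ∧ w ∈ s)

def IsEdgeTransitive (G : Type*) [Group G] [MulAction G V] (Γ : SimpleGraph V) : Prop :=
  ∀ u v u' v', Γ.Adj u v → Γ.Adj u' v' →
    ∃ g : G, (g • u = u' ∧ g • v = v') ∨ (g • u = v' ∧ g • v = u')

def IsLocallyTransitive (G : Type*) [Group G] [MulAction G V] (Γ : SimpleGraph V) : Prop :=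
  ∀ v, ∀ u ∈ Γ.neighborSet v, ∀ w ∈ Γ.neighborSet v, ∃ g ∈ stabilizer G v, g • u = w

/-- Quasiprimitivity of the local actions `G_v^Γ(v)`, phrased through the normal subgroups of
`G_v`, whose images are the normal subgroups of `G_v^Γ(v)`. -/
def IsLocallyQuasiprimitive (G : Type*) [Group G] [MulAction G V] (Γ : SimpleGraph V) : Prop :=
  ∀ v (N : Subgroup (stabilizer G v)), N.Normal →
    (∃ n ∈ N, ∃ u ∈ Γ.neighborSet v, (n : G) • u ≠ u) →
    ∀ u ∈ Γ.neighborSet v, ∀ w ∈ Γ.neighborSet v, ∃ n ∈ N, (n : G) • u = w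

theorem isCompleteBipartiteOn_empty_iff : Γ.IsCompleteBipartiteOn ∅ ↔ Γ = ⊥ := by
  simp [IsCompleteBipartiteOn, SimpleGraph.ext_iff, funext_iff]

theorem Preconnected.forall_of_adj_closed (hconn : Γ.Preconnected) {P : V → Prop}
    (hP : ∀ x y, Γ.Adj x y → P x → P y) {x : V} (hx : P x) (y : V) : P y := by
  obtain ⟨w⟩ := hconn x y
  induction w with
  | nil => exact hx
  | cons hadj _ ih => exact ih (hP _ _ hadj hx)

/-- The neighbourhood of each vertex of `X` is a single `K`-orbit, and along a walk these orbits
all coincide with the orbit of `y₀`. -/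
theorem isCompleteBipartiteOn_of_transitive_neighborSet {K : Type*} [Group K] [MulAction K V]
    (hconn : Γ.Preconnected) (hAdj : ∀ (k : K) (u w : V), Γ.Adj u w → Γ.Adj (k • u) (k • w))
    {X : Set V} (hcross : ∀ u w, Γ.Adj u w → (u ∈ X ↔ w ∉ X))
    (hfix : ∀ (k : K), ∀ x ∈ X, k • x = x)
    (htrans : ∀ x ∈ X, ∀ y ∈ Γ.neighborSet x, ∀ y' ∈ Γ.neighborSet x, ∃ k : K, k • y = y')
    {y₀ : V} (hy₀ : y₀ ∉ X) : Γ.IsCompleteBipartiteOn X := by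
  have hnbhd : ∀ x ∈ X, ∀ y, Γ.Adj x y → ∀ w, Γ.Adj x w ↔ w ∈ orbit K y := by
    refine fun x hx y hxy w => ⟨fun hxw => htrans x hx y hxy w hxw, ?_⟩
    rintro ⟨k, rfl⟩
    simpa [hfix k x hx] using hAdj k x y hxy
  let P : V → Prop := fun v =>
    (v ∈ X → ∀ w, Γ.Adj v w ↔ w ∈ orbit K y₀) ∧ (v ∉ X → v ∈ orbit K y₀)
  have hP : ∀ v, P v := by
    refine hconn.forall_of_adj_closed (fun x y hxy hPx => ?_)
      ⟨(absurd · hy₀), fun _ => mem_orbit_self y₀⟩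
    by_cases hx : x ∈ X
    · exact ⟨fun hy => ((hcross x y hxy).1 hx hy).elim, fun _ => ((hPx.1 hx) y).1 hxy⟩
    · have hy : y ∈ X := not_not.1 (mt (hcross x y hxy).2 hx)
      refine ⟨fun _ w => ?_, (absurd hy ·)⟩
      rw [hnbhd y hy x hxy.symm w, orbit_eq_iff.2 (hPx.2 hx)]
  intro u w
  constructor
  · intro huw
    have := hcross u w huw
    tauto
  · rintro (⟨hu, hw⟩ | ⟨hu, hw⟩)
    · exact ((hP u).1 hu w).2 ((hP w).2 hw)
    · exact (((hP w).1 hw u).2 ((hP u).2 hu)).symm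

section Voltage

variable {A : Type*} [Group A] [MulAction A V]

def voltage (α : V →[A] A) (x y : V) : A := (α x)⁻¹ * α y

theorem voltage_smul (α : V →[A] A) (a : A) (x y : V) :
    voltage α (a • x) (a • y) = voltage α x y := by
  simp [voltage, mul_assoc]

theorem voltage_swap (α : V →[A] A) (x y : V) : voltage α y x = (voltage α x y)⁻¹ := by
  simp [voltage]

theorem voltage_mul_voltage (α : V →[A] A) (x y z : V) :
    voltage α x y * voltage α y z = voltage α x z := by
  simp [voltage, mul_assoc]

theorem nonempty_mulActionHom_self (hfree : ∀ (a : A) (x : V), a • x = x → a = 1) :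
    Nonempty (V →[A] A) := by
  let rep : V → V := fun v => (Quotient.mk (orbitRel A V) v).out
  have hrep : ∀ v, ∃ a : A, a • rep v = v := fun v =>
    mem_orbit_symm.1 (orbitRel_apply.1 (Quotient.mk_out (s := orbitRel A V) v))
  have hrep_smul : ∀ (a : A) v, rep (a • v) = rep v := fun a v =>
    congrArg Quotient.out (Quotient.sound (orbitRel_apply.2 (mem_orbit v a)))
  have hcancel : ∀ (a b : A) (x : V), a • x = b • x → a = b := fun a b x h =>
    inv_mul_eq_one.1 (hfree _ x (by rw [mul_smul, ← h, inv_smul_smul]))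
  choose α hα using hrep
  refine ⟨⟨α, fun a v => hcancel _ _ (rep v) ?_⟩⟩
  rw [← hrep_smul a v, hα, id_eq, smul_eq_mul, mul_smul, hrep_smul, hα]

/-- The voltage from `v₀` to `a • v₀` is a conjugate of `a`, and it is the product of the
voltages along a walk from `v₀` to `a • v₀`. -/
theorem closure_voltage_eq_top (hconn : Γ.Connected) (α : V →[A] A) :
    Subgroup.closure {b | ∃ x y, Γ.Adj x y ∧ voltage α x y = b} = ⊤ := by
  set H := Subgroup.closure {b | ∃ x y, Γ.Adj x y ∧ voltage α x y = b}
  obtain ⟨v₀⟩ := hconn.nonempty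
  have hH : ∀ v, voltage α v₀ v ∈ H := by
    refine hconn.preconnected.forall_of_adj_closed (P := fun v => voltage α v₀ v ∈ H)
      (fun x y hxy hx => ?_) (x := v₀) (by simp [voltage])
    rw [← voltage_mul_voltage α v₀ x y]
    exact mul_mem hx (subset_closure ⟨x, y, hxy, rfl⟩)
  refine eq_top_iff.2 fun b _ => ?_
  simpa [voltage, mul_assoc] using hH ((α v₀ * b * (α v₀)⁻¹) • v₀)

end Voltage

section Action

variable {G : Type*} [Group G] [MulAction G V]

theorem IsEdgeTransitive.mem_orbit_or_mem_orbit (hconn : Γ.Preconnected)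
    (het : IsEdgeTransitive G Γ) {u w : V} (huw : Γ.Adj u w) (v : V) :
    v ∈ orbit G u ∨ v ∈ orbit G w := by
  have : Nontrivial V := ⟨⟨u, w, huw.ne⟩⟩
  obtain ⟨v', hvv'⟩ := hconn.exists_adj_of_nontrivial v
  obtain ⟨g, ⟨hgu, -⟩ | ⟨-, hgw⟩⟩ := het u w v v' huw hvv'
  exacts [Or.inl ⟨g, hgu⟩, Or.inr ⟨g, hgw⟩]

theorem IsEdgeTransitive.mem_orbit_iff_not_mem_orbit (hconn : Γ.Preconnected)
    (het : IsEdgeTransitive G Γ) {x y : V} (hy : y ∉ orbit G x) {u w : V} (huw : Γ.Adj u w) :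
    u ∈ orbit G x ↔ w ∉ orbit G x := by
  have hcover := het.mem_orbit_or_mem_orbit hconn huw
  constructor
  · intro hu hw
    rcases hcover y with h | h
    exacts [hy (orbit_eq_iff.2 hu ▸ h), hy (orbit_eq_iff.2 hw ▸ h)]
  · intro hw
    rcases hcover x with h | h
    exacts [mem_orbit_symm.1 h, absurd (mem_orbit_symm.1 h) hw]

theorem smul_eq_self_of_mem_orbit {z : G} (hz : z ∈ Subgroup.center G) {x : V}
    (hzx : z • x = x) {y : V} (hy : y ∈ orbit G x) : z • y = y := by
  obtain ⟨g, rfl⟩ := hy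
  rw [smul_smul, ← Subgroup.mem_center_iff.1 hz g, mul_smul, hzx]

/-- A nontrivial central `z` fixing `x₀` fixes the orbit `X` of `x₀` pointwise and moves a
neighbour of every vertex of `X`, so by local quasiprimitivity the central elements fixing `x₀`
are transitive on every `Γ(x)`, `x ∈ X`, and `Γ` would be complete bipartite on `X`. -/
theorem eq_one_of_mem_center_of_smul_eq_self [FaithfulSMul G V] (hconn : Γ.Preconnected)
    (hAdj : ∀ (g : G) (u w : V), Γ.Adj u w → Γ.Adj (g • u) (g • w))
    (hncb : ¬ ∃ s, Γ.IsCompleteBipartiteOn s) (hqp : IsLocallyQuasiprimitive G Γ)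
    (het : IsEdgeTransitive G Γ) {z : G} (hz : z ∈ Subgroup.center G) {x₀ : V}
    (hzx₀ : z • x₀ = x₀) : z = 1 := by
  by_contra hz1
  obtain ⟨y₀, hy₀⟩ : ∃ y, z • y ≠ y := by
    by_contra! h
    exact hz1 (eq_of_smul_eq_smul fun (y : V) => by rw [h y, one_smul])
  have hy₀X : y₀ ∉ orbit G x₀ := fun h => hy₀ (smul_eq_self_of_mem_orbit hz hzx₀ h)
  have hcross := fun u w (huw : Γ.Adj u w) => het.mem_orbit_iff_not_mem_orbit hconn hy₀X huw
  have : Nontrivial V := ⟨⟨x₀, y₀, fun h => hy₀X (h ▸ mem_orbit_self x₀)⟩⟩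
  obtain ⟨v, hy₀v⟩ := hconn.exists_adj_of_nontrivial y₀
  have hvX : v ∈ orbit G x₀ := not_not.1 fun h => hy₀X ((hcross y₀ v hy₀v).2 h)
  have hmoves : ∀ x ∈ orbit G x₀, ∃ u ∈ Γ.neighborSet x, z • u ≠ u := by
    intro x hx
    obtain ⟨g, rfl⟩ := orbit_eq_iff.2 hvX ▸ hx
    refine ⟨g • y₀, hAdj g v y₀ hy₀v.symm, fun h => hy₀ (smul_left_cancel g ?_)⟩
    rwa [smul_smul, ← Subgroup.mem_center_iff.1 hz g, mul_smul] at h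
  let K := Subgroup.center G ⊓ stabilizer G x₀
  refine hncb ⟨orbit G x₀, isCompleteBipartiteOn_of_transitive_neighborSet (K := K) hconn
    (fun k u w => hAdj k u w) hcross ?_ ?_ hy₀X⟩
  · exact fun k x hx => smul_eq_self_of_mem_orbit k.2.1 k.2.2 hx
  · intro x hx y hy y' hy'
    let N := (Subgroup.center G).comap (stabilizer G x).subtype
    have hzN : (⟨z, smul_eq_self_of_mem_orbit hz hzx₀ hx⟩ : stabilizer G x) ∈ N := hz
    obtain ⟨n, hn, hny⟩ := hqp x N inferInstance ⟨_, hzN, hmoves x hx⟩ y hy y' hy'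
    exact ⟨⟨n, hn, smul_eq_self_of_mem_orbit hn n.2 (mem_orbit_symm.1 hx)⟩, hny⟩

theorem mem_of_smul_mem_orbit {M : Subgroup G} {x : V} (hM : stabilizer G x ≤ M) {g : G}
    (hg : g • x ∈ orbit M x) : g ∈ M := by
  obtain ⟨m, hm : (m : G) • x = g • x⟩ := hg
  have hfix : ((m : G)⁻¹ * g) • x = x := by rw [mul_smul, ← hm, inv_smul_smul]
  simpa using mul_mem m.2 (hM hfix)

theorem IsLocallyTransitive.mem_orbit_of_adj (hlat : IsLocallyTransitive G Γ)
    (hAdj : ∀ (g : G) (u w : V), Γ.Adj u w → Γ.Adj (g • u) (g • w)) {M : Subgroup G}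
    (hM : ∀ x : V, stabilizer G x ≤ M) {u w a b : V} (huw : Γ.Adj u w) (ha : a ∈ orbit M u)
    (hab : Γ.Adj a b) : b ∈ orbit M w := by
  obtain ⟨m, rfl⟩ := ha
  have hub : Γ.Adj u ((m : G)⁻¹ • b) := by
    simpa [Subgroup.smul_def] using hAdj (m : G)⁻¹ _ _ hab
  obtain ⟨g, hg, hgw⟩ := hlat u w huw _ hub
  exact ⟨m * ⟨g, hM u hg⟩, show ((m : G) * g) • w = b by rw [mul_smul, hgw, smul_inv_smul]⟩

theorem IsLocallyTransitive.mem_orbit_or_mem_orbit (hlat : IsLocallyTransitive G Γ)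
    (hconn : Γ.Preconnected) (hAdj : ∀ (g : G) (u w : V), Γ.Adj u w → Γ.Adj (g • u) (g • w))
    {M : Subgroup G} (hM : ∀ x : V, stabilizer G x ≤ M) {u w : V} (huw : Γ.Adj u w) (v : V) :
    v ∈ orbit M u ∨ v ∈ orbit M w := by
  refine hconn.forall_of_adj_closed (P := fun v => v ∈ orbit M u ∨ v ∈ orbit M w)
    (fun a b hab => ?_) (Or.inl (mem_orbit_self u)) v
  rintro (ha | ha)
  · exact Or.inr (hlat.mem_orbit_of_adj hAdj hM huw ha hab)
  · exact Or.inl (hlat.mem_orbit_of_adj hAdj hM huw.symm ha hab)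

/-- An element outside `M` swaps the two `M`-orbits. -/
theorem sq_mem_of_forall_mem_orbit_or_mem_orbit {M : Subgroup G} [M.Normal]
    (hM : ∀ x : V, stabilizer G x ≤ M) {u w : V} (hcover : ∀ v, v ∈ orbit M u ∨ v ∈ orbit M w)
    (g : G) : g ^ 2 ∈ M := by
  by_cases hg : g ∈ M
  · exact pow_mem hg 2
  obtain ⟨m, hm : (m : G) • w = g • u⟩ :=
    (hcover (g • u)).resolve_left (mt (mem_of_smul_mem_orbit (hM u)) hg)
  obtain ⟨m', hm' : (m' : G) • u = g • w⟩ :=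
    (hcover (g • w)).resolve_right (mt (mem_of_smul_mem_orbit (hM w)) hg)
  refine mem_of_smul_mem_orbit (hM u)
    ⟨⟨g * m * g⁻¹ * m', mul_mem (‹M.Normal›.conj_mem _ m.2 g) m'.2⟩, ?_⟩
  show (g * m * g⁻¹ * m') • u = g ^ 2 • u
  simp only [mul_smul, hm', inv_smul_smul, hm, pow_two]

theorem stabilizer_le_ker_transferCenterPow [Finite G]
    (hfree : ∀ z ∈ Subgroup.center G, ∀ x : V, z • x = x → z = 1) (x : V) :
    stabilizer G x ≤ (MonoidHom.transferCenterPow G).ker := by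
  intro h hh
  have hcentral := (MonoidHom.transferCenterPow G h).2
  rw [MonoidHom.transferCenterPow_apply] at hcentral
  rw [MonoidHom.mem_ker, Subtype.ext_iff, MonoidHom.transferCenterPow_apply]
  exact hfree _ hcentral x (pow_mem hh _)

theorem pow_two_mul_index_center_eq_one [Finite G]
    (hfree : ∀ z ∈ Subgroup.center G, ∀ x : V, z • x = x → z = 1) (hconn : Γ.Preconnected)
    (hAdj : ∀ (g : G) (u w : V), Γ.Adj u w → Γ.Adj (g • u) (g • w))
    (hlat : IsLocallyTransitive G Γ) {u w : V} (huw : Γ.Adj u w) (g : G) :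
    g ^ (2 * (Subgroup.center G).index) = 1 := by
  have hM := stabilizer_le_ker_transferCenterPow hfree
  have hsq := sq_mem_of_forall_mem_orbit_or_mem_orbit hM
    (hlat.mem_orbit_or_mem_orbit hconn hAdj hM huw) g
  rwa [MonoidHom.mem_ker, Subtype.ext_iff, MonoidHom.transferCenterPow_apply, ← pow_mul] at hsq

theorem rank_center_le_index [Finite G]
    (hfree : ∀ z ∈ Subgroup.center G, ∀ x : V, z • x = x → z = 1) (hconn : Γ.Connected)
    (het : IsEdgeTransitive G Γ) {u w : V} (huw : Γ.Adj u w) :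
    Group.rank (Subgroup.center G) ≤ (Subgroup.center G).index := by
  classical
  obtain ⟨α⟩ := nonempty_mulActionHom_self (A := Subgroup.center G) (V := V)
    fun z x hx => Subtype.ext (hfree z z.2 x hx)
  let f : G ⧸ Subgroup.center G → Subgroup.center G :=
    Quotient.lift (fun g => voltage α (g • u) (g • w)) fun g g' h => by
      have hz : g⁻¹ * g' ∈ Subgroup.center G := QuotientGroup.leftRel_apply.1 h
      have hsmul : ∀ v : V, g' • v = (⟨g⁻¹ * g', hz⟩ : Subgroup.center G) • g • v := fun v => by
        rw [Subgroup.smul_def, smul_smul, ← Subgroup.mem_center_iff.1 hz g, mul_inv_cancel_left]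
      rw [hsmul, hsmul, voltage_smul]
  have : Fintype (G ⧸ Subgroup.center G) := Fintype.ofFinite _
  refine (Group.rank_le (S := Finset.univ.image f) ?_).trans (Finset.card_image_le.trans ?_)
  · rw [eq_top_iff, ← closure_voltage_eq_top hconn α, closure_le]
    rintro _ ⟨x, y, hxy, rfl⟩
    have hf : ∀ g : G, f g ∈ closure (Finset.univ.image f : Set (Subgroup.center G)) :=
      fun g => subset_closure (Finset.mem_image_of_mem f (Finset.mem_univ _))
    obtain ⟨g, ⟨rfl, rfl⟩ | ⟨rfl, rfl⟩⟩ := het u w x y huw hxy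
    · exact hf g
    · rw [voltage_swap]
      exact inv_mem (hf g)
  · rw [Finset.card_univ, ← Nat.card_eq_fintype_card, index_eq_card]

end Action

end SimpleGraph

theorem card_le_of_locally_quasiprimitive_general
    (V G : Type*) [Group G] [Finite G] [MulAction G V] [FaithfulSMul G V]
    (Γ : SimpleGraph V) (hconn : Γ.Connected)
    (hAut : ∀ (g : G) (u w : V), Γ.Adj (g • u) (g • w) ↔ Γ.Adj u w)
    (hncb : ¬ ∃ s : Set V, ∀ u w : V,
      Γ.Adj u w ↔ ((u ∈ s ∧ w ∉ s) ∨ (u ∉ s ∧ w ∈ s)))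
    (hqp : ∀ (v : V) (N : Subgroup (MulAction.stabilizer G v)), N.Normal →
      (∃ n ∈ N, ∃ u ∈ Γ.neighborSet v, ((n : MulAction.stabilizer G v) : G) • u ≠ u) →
      ∀ u ∈ Γ.neighborSet v, ∀ w ∈ Γ.neighborSet v,
        ∃ n ∈ N, ((n : MulAction.stabilizer G v) : G) • u = w)
    (hlat : ∀ (v : V), ∀ u ∈ Γ.neighborSet v, ∀ w ∈ Γ.neighborSet v,
      ∃ g ∈ MulAction.stabilizer G v, g • u = w)
    (het : ∀ (u v u' v' : V), Γ.Adj u v → Γ.Adj u' v' →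
      ∃ g : G, (g • u = u' ∧ g • v = v') ∨ (g • u = v' ∧ g • v = u')) :
    Nat.card G ≤ (Subgroup.center G).index *
      (2 * (Subgroup.center G).index) ^ (Subgroup.center G).index := by
  set t := (Subgroup.center G).index
  have ht : 0 < 2 * t := by simp [t, Nat.pos_iff_ne_zero, index_ne_zero_of_finite]
  have hAdj : ∀ (g : G) (u w : V), Γ.Adj u w → Γ.Adj (g • u) (g • w) :=
    fun g u w => (hAut g u w).2
  obtain ⟨u, w, huw⟩ : ∃ u w, Γ.Adj u w := SimpleGraph.ne_bot_iff_exists_adj.1 fun h =>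
    hncb ⟨∅, SimpleGraph.isCompleteBipartiteOn_empty_iff.2 h⟩
  have hfree : ∀ z ∈ Subgroup.center G, ∀ x : V, z • x = x → z = 1 := fun z hz x hx =>
    SimpleGraph.eq_one_of_mem_center_of_smul_eq_self hconn.preconnected hAdj hncb hqp het hz hx
  have hexp : ∀ z : Subgroup.center G, z ^ (2 * t) = 1 := fun z => Subtype.ext <|
    SimpleGraph.pow_two_mul_index_center_eq_one hfree hconn.preconnected hAdj hlat huw z
  have hrank := SimpleGraph.rank_center_le_index hfree hconn het huw
  open scoped IsMulCommutative in
  calc Nat.card G = t * Nat.card (Subgroup.center G) := by rw [mul_comm, card_mul_index]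
    _ ≤ t * (2 * t) ^ Group.rank (Subgroup.center G) :=
      Nat.mul_le_mul_left t (Nat.le_of_dvd (pow_pos ht _) (card_dvd_exponent_pow_rank' _ hexp))
    _ ≤ t * (2 * t) ^ t := Nat.mul_le_mul_left t (Nat.pow_le_pow_right ht hrank)

/-- Let `Γ` be a finite connected graph, not complete bipartite, and `G ≤ Aut(Γ)` locally
quasiprimitive, edge-transitive and locally arc-transitive. With `Z = Z(G)` and
`t = |G : Z|` we have `|G| ≤ t · (2t)^t`; equivalently `|G : Z(G)| ≥ F(|G|)` for the
strictly increasing inverse `F` of `x ↦ x(2x)^x`. -/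
theorem card_le_of_locally_quasiprimitive
    (V G : Type*) [Fintype V] [Group G] [Finite G] [MulAction G V] [FaithfulSMul G V]
    (Γ : SimpleGraph V) (hconn : Γ.Connected)
    (hAut : ∀ (g : G) (u w : V), Γ.Adj (g • u) (g • w) ↔ Γ.Adj u w)
    (hncb : ¬ ∃ s : Set V, ∀ u w : V,
      Γ.Adj u w ↔ ((u ∈ s ∧ w ∉ s) ∨ (u ∉ s ∧ w ∈ s)))
    (hqp : ∀ (v : V) (N : Subgroup (MulAction.stabilizer G v)), N.Normal →
      (∃ n ∈ N, ∃ u ∈ Γ.neighborSet v, ((n : MulAction.stabilizer G v) : G) • u ≠ u) →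
      ∀ u ∈ Γ.neighborSet v, ∀ w ∈ Γ.neighborSet v,
        ∃ n ∈ N, ((n : MulAction.stabilizer G v) : G) • u = w)
    (hlat : ∀ (v : V), ∀ u ∈ Γ.neighborSet v, ∀ w ∈ Γ.neighborSet v,
      ∃ g ∈ MulAction.stabilizer G v, g • u = w)
    (het : ∀ (u v u' v' : V), Γ.Adj u v → Γ.Adj u' v' →
      ∃ g : G, (g • u = u' ∧ g • v = v') ∨ (g • u = v' ∧ g • v = u')) :
    Nat.card G ≤ (Subgroup.center G).index *
      (2 * (Subgroup.center G).index) ^ (Subgroup.center G).index :=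
  card_le_of_locally_quasiprimitive_general V G Γ hconn hAut hncb hqp hlat het
end
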